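/- Let f : ℂ → ℂ and let x_0, x_1, … be pairwise distinct complex numbers. Define the inverse differences by φ_0[x_k] = f(x_k) and φ_{i+1}[x_0,…,x_i,x_k] = (x_k − x_i)/(φ_i[x_0,…,x_{i-1},x_k] − φ_i[x_0,…,x_i]) for k > i. Fix i ≥ 0 and k > i, assume all inverse differences φ_j[x_0,…,x_{j-1},x_m] for 0 ≤ j ≤ i and m ∈ {j, j+1, …, i} ∪ {k} are well defined, set d_m = φ_m[x_0,…,x_m], define A_m, B_m by the Wallis recurrence A_{-2} = 0, B_{-2} = 1, A_{-1} = 1, B_{-1} = 0, A_m = d_m·A_{m-1} + (X − x_{m-1})·A_{m-2}, B_m = d_m·B_{m-1} + (X − x_{m-1})·B_{m-2}, and set R_m(x) = f(x)B_m(x) − A_m(x). If R_i(x_k) ≠ 0, then φ_{i+1}[x_0,…,x_i,x_k] is well defined and φ_{i+1}[x_0,…,x_i,x_k] = −(x_k − x_i)·R_{i-1}(x_k)/R_i(x_k). -/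

import Mathlib

open Polynomial

/-- Wallis numerator polynomials of the Thiele-type continued fraction
`d₀ + (x − x₀)/(d₁ + (x − x₁)/(d₂ + …))`, with index shifted by 2:
`wA d xs 0 = A₋₂ = 0`, `wA d xs 1 = A₋₁ = 1`, `wA d xs (m+2) = A_m`. -/
noncomputable def wA (d xs : ℕ → ℂ) : ℕ → ℂ[X]
  | 0 => 0
  | 1 => 1
  | 2 => C (d 0)
  | (m + 3) => C (d (m + 1)) * wA d xs (m + 2) + (X - C (xs m)) * wA d xs (m + 1)

/-- Wallis denominator polynomials, with index shifted by 2: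
`wB d xs 0 = B₋₂ = 1`, `wB d xs 1 = B₋₁ = 0`, `wB d xs (m+2) = B_m`. -/
noncomputable def wB (d xs : ℕ → ℂ) : ℕ → ℂ[X]
  | 0 => 1
  | 1 => 0
  | 2 => 1
  | (m + 3) => C (d (m + 1)) * wB d xs (m + 2) + (X - C (xs m)) * wB d xs (m + 1)

/-- Inverse differences of `f` at the points `xs`: `phi f xs i k` denotes
`φ_i[x_0, …, x_{i-1}, x_k]`, defined by `φ_0[x_k] = f(x_k)` and
`φ_{i+1}[x_0,…,x_i,x_k] = (x_k − x_i)/(φ_i[x_0,…,x_{i-1},x_k] − φ_i[x_0,…,x_i])`. -/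
noncomputable def phi (f : ℂ → ℂ) (xs : ℕ → ℂ) : ℕ → ℕ → ℂ
  | 0, k => f (xs k)
  | (i + 1), k => (xs k - xs i) / (phi f xs i k - phi f xs i i)

/-- The linearized residual `R_m(x) = f(x)·B_m(x) − A_m(x)` of the `m`th convergent of a
Thiele-type continued fraction (index shifted by 2, so `linRes f d xs x (m+2) = R_m(x)`,
`linRes f d xs x 1 = R_{-1}(x) = −1`, `linRes f d xs x 0 = R_{-2}(x) = f(x)`). -/
noncomputable def linRes (f : ℂ → ℂ) (d xs : ℕ → ℂ) (x : ℂ) (k : ℕ) : ℂ :=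
  f x * (wB d xs k).eval x - (wA d xs k).eval x

/-!
By the Wallis recurrence, `R_{m+1} = d_{m+1} R_m + (x - x_m) R_{m-1}`. At `x = x_k` the definition
of the inverse difference gives `x_k - x_m = φ_{m+1}[…, x_k] · (φ_m[…, x_k] - d_m)`, and induction
on `m` turns the three-term recurrence into the two-term identity
`R_m(x_k) = (d_m - φ_m[x_0,…,x_{m-1},x_k]) · R_{m-1}(x_k)`.
For `m = i` and `R_i(x_k) ≠ 0` both factors are nonzero, and the claimed formula is the
definition of `φ_{i+1}[x_0,…,x_i,x_k]` rewritten with this identity.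
-/

theorem linRes_one (f : ℂ → ℂ) (d xs : ℕ → ℂ) (x : ℂ) : linRes f d xs x 1 = -1 := by
  simp [linRes, wA, wB]

theorem linRes_two (f : ℂ → ℂ) (d xs : ℕ → ℂ) (x : ℂ) :
    linRes f d xs x 2 = f x - d 0 := by
  simp [linRes, wA, wB]

theorem linRes_add_three (f : ℂ → ℂ) (d xs : ℕ → ℂ) (x : ℂ) (n : ℕ) :
    linRes f d xs x (n + 3) =
      d (n + 1) * linRes f d xs x (n + 2) + (x - xs n) * linRes f d xs x (n + 1) := by
  simp only [linRes, wA, wB, eval_add, eval_mul, eval_C, eval_sub, eval_X]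
  ring

theorem phi_succ_mul_sub (f : ℂ → ℂ) (xs : ℕ → ℂ) {n k : ℕ}
    (h : phi f xs n k ≠ phi f xs n n) :
    phi f xs (n + 1) k * (phi f xs n k - phi f xs n n) = xs k - xs n := by
  rw [phi]
  exact div_mul_cancel₀ _ (sub_ne_zero.mpr h)

theorem linRes_phi_eq_sub_mul (f : ℂ → ℂ) (xs : ℕ → ℂ) (k : ℕ) :
    ∀ m, (∀ j < m, phi f xs j k ≠ phi f xs j j) →
      linRes f (fun m => phi f xs m m) xs (xs k) (m + 2) =
        (phi f xs m m - phi f xs m k) * linRes f (fun m => phi f xs m m) xs (xs k) (m + 1)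
  | 0, _ => by
    rw [linRes_two, linRes_one, phi, phi]
    ring
  | n + 1, hwd => by
    have ih := linRes_phi_eq_sub_mul f xs k n fun j hj => hwd j (hj.trans n.lt_succ_self)
    rw [linRes_add_three, ih, ← phi_succ_mul_sub f xs (hwd n n.lt_succ_self)]
    ring

theorem thiele_inverse_difference_residual_general (f : ℂ → ℂ) (xs : ℕ → ℂ)
    (i k : ℕ)
    (hwd : ∀ j m, j < i → ((j < m ∧ m ≤ i) ∨ m = k) → phi f xs j m ≠ phi f xs j j)
    (hR : linRes f (fun m => phi f xs m m) xs (xs k) (i + 2) ≠ 0) :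
    phi f xs i k ≠ phi f xs i i ∧
      phi f xs (i + 1) k =
        -(xs k - xs i) * linRes f (fun m => phi f xs m m) xs (xs k) (i + 1) /
          linRes f (fun m => phi f xs m m) xs (xs k) (i + 2) := by
  have hres := linRes_phi_eq_sub_mul f xs k i fun j hj => hwd j k hj (Or.inr rfl)
  rw [hres] at hR ⊢
  have hdiff := left_ne_zero_of_mul hR
  have hne : phi f xs i k ≠ phi f xs i i := fun h => hdiff (sub_eq_zero.mpr h.symm)
  refine ⟨hne, ?_⟩
  rw [phi, div_eq_div_iff (sub_ne_zero.mpr hne) hR]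
  ring

/-- Inverse differences as ratios of linearized residuals: if all inverse differences
`φ_j[x_0,…,x_{j-1},x_m]` for `0 ≤ j ≤ i` and `m ∈ {j,…,i} ∪ {k}` are well defined (every
denominator in the recursion is nonzero) and `R_i(x_k) ≠ 0`, then `φ_{i+1}[x_0,…,x_i,x_k]`
is well defined and equals `−(x_k − x_i)·R_{i-1}(x_k)/R_i(x_k)`, where `d_m = φ_m[x_0,…,x_m]`
and `R_m(x) = f(x)B_m(x) − A_m(x)`. -/
theorem thiele_inverse_difference_residual (f : ℂ → ℂ) (xs : ℕ → ℂ)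
    (hdist : Function.Injective xs) (i k : ℕ) (hik : i < k)
    (hwd : ∀ j m, j < i → ((j < m ∧ m ≤ i) ∨ m = k) → phi f xs j m ≠ phi f xs j j)
    (hR : linRes f (fun m => phi f xs m m) xs (xs k) (i + 2) ≠ 0) :
    phi f xs i k ≠ phi f xs i i ∧
      phi f xs (i + 1) k =
        -(xs k - xs i) * linRes f (fun m => phi f xs m m) xs (xs k) (i + 1) /
          linRes f (fun m => phi f xs m m) xs (xs k) (i + 2) :=
  thiele_inverse_difference_residual_general f xs i k hwd hR
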